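/- Under the standing assumptions on the 3-block Bregman ADMM, suppose the sequence {(x^k, y^k, z^k)} is bounded and let (x*, y*, z*, p*) be any cluster point of the sequence w^k = (x^k, y^k, z^k, p^k), i.e., the limit of some subsequence w^{k_j}. Then Ax* + By* + Cz* = 0 and Cᵀp* = −∇h(z*). -/

import Mathlib

open RealInnerProductSpace Filter

noncomputable section

/-- Euclidean space `ℝ^n`. -/
abbrev Eu (n : ℕ) := EuclideanSpace ℝ (Fin n)

/-- The Bregman distance `Δ_φ(u,v) = φ(u) − φ(v) − ⟨∇φ(v), u−v⟩` associated with a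
differentiable function `φ` whose gradient is `φ'`. -/
def Breg {n : ℕ} (φ : Eu n → ℝ) (φ' : Eu n → Eu n) (u v : Eu n) : ℝ :=
  φ u - φ v - ⟪φ' v, u - v⟫

/-- `F` is `μ`-strongly convex iff `F − (μ/2)‖·‖²` is convex. -/
def StrongConvex {n : ℕ} (μ : ℝ) (F : Eu n → ℝ) : Prop :=
  ConvexOn ℝ Set.univ (fun u => F u - μ / 2 * ‖u‖ ^ 2)

/-- The augmented Lagrangian
`L_α(x,y,z,p) = f(x)+g(y)+h(z)+⟨p, Ax+By+Cz⟩+(α/2)‖Ax+By+Cz‖²`. -/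
def Lag {n₁ n₂ n₃ m : ℕ} (f : Eu n₁ → ℝ) (g : Eu n₂ → ℝ) (h : Eu n₃ → ℝ)
    (A : Eu n₁ →L[ℝ] Eu m) (B : Eu n₂ →L[ℝ] Eu m) (C : Eu n₃ →L[ℝ] Eu m)
    (α : ℝ) (x : Eu n₁) (y : Eu n₂) (z : Eu n₃) (p : Eu m) : ℝ :=
  f x + g y + h z + ⟪p, A x + B y + C z⟫ + α / 2 * ‖A x + B y + C z‖ ^ 2

/-- All the data and standing assumptions of the 3-block Bregman ADMM:
objective functions `f, g, h`, Bregman kernels `φ₁, φ₂, φ₃` (with gradients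
`φ₁', φ₂', φ₃'`, and `h'` the gradient of `h`), matrices `A, B, C` (as linear maps),
parameters, iterate sequences `x, y, z, p`, and the standing hypotheses
(lower semicontinuity of `f, g`; differentiability with Lipschitz gradients;
convexity of kernels; the strong-convexity alternatives; quantitative full row rank
of `C`; the lower bound on `α`; and the BADMM update rules, where each of the three
primal updates is a global minimizer of the corresponding subproblem). -/
structure BADMM (n₁ n₂ n₃ m : ℕ) where
  f : Eu n₁ → ℝ
  g : Eu n₂ → ℝ
  h : Eu n₃ → ℝ
  φ₁ : Eu n₁ → ℝ
  φ₂ : Eu n₂ → ℝ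
  φ₃ : Eu n₃ → ℝ
  h' : Eu n₃ → Eu n₃
  φ₁' : Eu n₁ → Eu n₁
  φ₂' : Eu n₂ → Eu n₂
  φ₃' : Eu n₃ → Eu n₃
  A : Eu n₁ →L[ℝ] Eu m
  B : Eu n₂ →L[ℝ] Eu m
  C : Eu n₃ →L[ℝ] Eu m
  α : ℝ
  ℓh : ℝ
  ℓ₁ : ℝ
  ℓ₂ : ℝ
  ℓ₃ : ℝ
  μ₁ : ℝ
  μ₂ : ℝ
  μ₃ : ℝ
  σC : ℝ
  x : ℕ → Eu n₁
  y : ℕ → Eu n₂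
  z : ℕ → Eu n₃
  p : ℕ → Eu m
  hα_pos : 0 < α
  hf_lsc : LowerSemicontinuous f
  hg_lsc : LowerSemicontinuous g
  hgrad_h : ∀ v, HasGradientAt h (h' v) v
  hgrad_φ₁ : ∀ v, HasGradientAt φ₁ (φ₁' v) v
  hgrad_φ₂ : ∀ v, HasGradientAt φ₂ (φ₂' v) v
  hgrad_φ₃ : ∀ v, HasGradientAt φ₃ (φ₃' v) v
  hℓh_nonneg : 0 ≤ ℓh
  hℓ₁_nonneg : 0 ≤ ℓ₁
  hℓ₂_nonneg : 0 ≤ ℓ₂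
  hℓ₃_nonneg : 0 ≤ ℓ₃
  hlip_h : ∀ a b, ‖h' a - h' b‖ ≤ ℓh * ‖a - b‖
  hlip_φ₁ : ∀ a b, ‖φ₁' a - φ₁' b‖ ≤ ℓ₁ * ‖a - b‖
  hlip_φ₂ : ∀ a b, ‖φ₂' a - φ₂' b‖ ≤ ℓ₂ * ‖a - b‖
  hlip_φ₃ : ∀ a b, ‖φ₃' a - φ₃' b‖ ≤ ℓ₃ * ‖a - b‖
  hφ₁_convex : ConvexOn ℝ Set.univ φ₁
  hφ₂_convex : ConvexOn ℝ Set.univ φ₂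
  hφ₃_convex : ConvexOn ℝ Set.univ φ₃
  hμ₁_pos : 0 < μ₁
  hμ₂_pos : 0 < μ₂
  hμ₃_pos : 0 < μ₃
  hsc₁ : StrongConvex μ₁ f ∨ StrongConvex μ₁ φ₁
  hsc₂ : StrongConvex μ₂ g ∨ StrongConvex μ₂ φ₂
  hsc₃ : StrongConvex μ₃ h ∨ StrongConvex μ₃ φ₃
  hσC_pos : 0 < σC
  hC_rank : ∀ u : Eu m, σC * ‖u‖ ^ 2 ≤ ‖(ContinuousLinearMap.adjoint C) u‖ ^ 2
  hα_large : 4 * ((ℓh + ℓ₃) ^ 2 + ℓ₃ ^ 2) / (μ₃ * σC) < α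
  hx_min : ∀ k, ∀ ξ : Eu n₁,
    Lag f g h A B C α (x (k+1)) (y k) (z k) (p k) + Breg φ₁ φ₁' (x (k+1)) (x k) ≤
      Lag f g h A B C α ξ (y k) (z k) (p k) + Breg φ₁ φ₁' ξ (x k)
  hy_min : ∀ k, ∀ ξ : Eu n₂,
    Lag f g h A B C α (x (k+1)) (y (k+1)) (z k) (p k) + Breg φ₂ φ₂' (y (k+1)) (y k) ≤
      Lag f g h A B C α (x (k+1)) ξ (z k) (p k) + Breg φ₂ φ₂' ξ (y k)
  hz_min : ∀ k, ∀ ξ : Eu n₃,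
    Lag f g h A B C α (x (k+1)) (y (k+1)) (z (k+1)) (p k) + Breg φ₃ φ₃' (z (k+1)) (z k) ≤
      Lag f g h A B C α (x (k+1)) (y (k+1)) ξ (p k) + Breg φ₃ φ₃' ξ (z k)
  hp_upd : ∀ k, p (k+1) = p k + α • (A (x (k+1)) + B (y (k+1)) + C (z (k+1)))

namespace BADMM

variable {n₁ n₂ n₃ m : ℕ} (P : BADMM n₁ n₂ n₃ m)

/-- `σ₀ = 2ℓ₃²/(ασ_C)`. -/
def σ0 : ℝ := 2 * P.ℓ₃ ^ 2 / (P.α * P.σC)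

/-- `σ₁ = (1/2)·min(μ₁, μ₂, μ₃ − 4(ℓ_h+ℓ₃)²/(ασ_C) − 4ℓ₃²/(ασ_C))`. -/
def σ1 : ℝ :=
  (1 / 2) * min P.μ₁ (min P.μ₂
    (P.μ₃ - 4 * (P.ℓh + P.ℓ₃) ^ 2 / (P.α * P.σC) - 4 * P.ℓ₃ ^ 2 / (P.α * P.σC)))

/-- The augmented Lagrangian of the problem, `L_α`. -/
def L (x : Eu n₁) (y : Eu n₂) (z : Eu n₃) (p : Eu m) : ℝ :=
  Lag P.f P.g P.h P.A P.B P.C P.α x y z p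

/-- `L̂(x,y,z,p,ẑ) = L_α(x,y,z,p) + σ₀‖z−ẑ‖²`. -/
def Lhat (x : Eu n₁) (y : Eu n₂) (z : Eu n₃) (p : Eu m) (zh : Eu n₃) : ℝ :=
  P.L x y z p + P.σ0 * ‖z - zh‖ ^ 2

/-- `‖w^{k+1}−w^k‖²`. -/
def dw2 (k : ℕ) : ℝ :=
  ‖P.x (k+1) - P.x k‖ ^ 2 + ‖P.y (k+1) - P.y k‖ ^ 2 +
    ‖P.z (k+1) - P.z k‖ ^ 2 + ‖P.p (k+1) - P.p k‖ ^ 2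

end BADMM

/-
The first-order condition of the `z`-update reads `Cᵀp^{k+1} = ∇φ₃(z^k) − ∇h(z^{k+1}) − ∇φ₃(z^{k+1})`.
Differencing it and using the Lipschitz gradients and `‖Cᵀu‖² ≥ σ_C‖u‖²` bounds the dual step
`p^{k+2} − p^{k+1} = α(Ax^{k+2} + By^{k+2} + Cz^{k+2})` by the last two `z`-steps. Together with the
minimality of the three updates (the `z`-update gaining `μ₃/2‖z^{k+1} − z^k‖²` from the strong
convexity of `h` or `φ₃`), this makes
`L̂(w^{k+1}, z^k) = L_α(w^{k+1}) + σ₀‖z^{k+1} − z^k‖²` decrease by at least `σ₁‖z^{k+2} − z^{k+1}‖²`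
per step. Along the convergent subsequence it stays bounded below by lower semicontinuity of
`L_α`, so the `z`-steps tend to zero, and with them the residual `Ax^k + By^k + Cz^k` and
`Cᵀp^k + ∇h(z^k)`; passing to the limit along the subsequence gives both claims.
-/

open InnerProductSpace Set Topology

section ConvexGradient

variable {E F : Type*} [NormedAddCommGroup E] [InnerProductSpace ℝ E]
  [NormedAddCommGroup F] [InnerProductSpace ℝ F]

theorem convexOn_inner_add_sq_norm_comp (p u : F) (C : E →L[ℝ] F) {α : ℝ} (hα : 0 ≤ α) :
    ConvexOn ℝ univ (fun ζ => ⟪p, u + C ζ⟫ + α / 2 * ‖u + C ζ‖ ^ 2) := by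
  have hsq : ConvexOn ℝ univ (fun w : F => ‖w‖ ^ 2) :=
    (convexOn_norm convex_univ).pow (fun _ _ => norm_nonneg _) 2
  have hQ : ConvexOn ℝ univ (fun w : F => ⟪p, w⟫ + α / 2 * ‖w‖ ^ 2) :=
    ((innerₛₗ ℝ p).convexOn convex_univ).add (hsq.smul (by positivity : 0 ≤ α / 2))
  exact (hQ.translate_right u).comp_linearMap C.toLinearMap

variable [CompleteSpace E] [CompleteSpace F]

theorem HasGradientAt.add {f g : E → ℝ} {f' g' x : E} (hf : HasGradientAt f f' x)
    (hg : HasGradientAt g g' x) : HasGradientAt (fun y => f y + g y) (f' + g') x := by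
  rw [hasGradientAt_iff_hasFDerivAt, map_add]
  exact hf.hasFDerivAt.add hg.hasFDerivAt

theorem HasGradientAt.const_add {f : E → ℝ} {f' x : E} (hf : HasGradientAt f f' x) (c : ℝ) :
    HasGradientAt (fun y => c + f y) f' x :=
  hf.hasFDerivAt.const_add c

theorem hasGradientAt_inner_add_sq_norm_comp (p u : F) (C : E →L[ℝ] F) (α : ℝ) (ξ : E) :
    HasGradientAt (fun ζ => ⟪p, u + C ζ⟫ + α / 2 * ‖u + C ζ‖ ^ 2)
      (ContinuousLinearMap.adjoint C (p + α • (u + C ξ))) ξ := by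
  have haff : HasFDerivAt (fun ζ => u + C ζ) C ξ := C.hasFDerivAt.const_add u
  rw [hasGradientAt_iff_hasFDerivAt]
  refine (((innerSL ℝ p).hasFDerivAt.comp ξ haff).add
    (haff.norm_sq.const_mul (α / 2))).congr_fderiv ?_
  ext w
  simp only [map_add, ContinuousLinearMap.add_comp, smul_add, add_apply,
    ContinuousLinearMap.comp_apply, coe_innerSL_apply, smul_apply, nsmul_eq_mul, Nat.cast_ofNat,
    smul_eq_mul, map_smul, toDual_apply_apply, ContinuousLinearMap.adjoint_inner_left]
  ring

theorem ConvexOn.add_inner_gradient_le {φ : E → ℝ} {g v : E} (hφ : ConvexOn ℝ univ φ)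
    (hg : HasGradientAt φ g v) (u : E) : φ v + ⟪g, u - v⟫ ≤ φ u := by
  have hline : ConvexOn ℝ univ (φ ∘ AffineMap.lineMap (k := ℝ) v u) := by
    simpa using hφ.comp_affineMap (AffineMap.lineMap (k := ℝ) v u)
  have hderiv : HasDerivAt (φ ∘ AffineMap.lineMap (k := ℝ) v u) ⟪g, u - v⟫ 0 := by
    have hg0 : HasFDerivAt φ (toDual ℝ E g) (AffineMap.lineMap (k := ℝ) v u 0) := by
      simpa using hg.hasFDerivAt
    simpa [toDual_apply_apply] using hg0.comp_hasDerivAt 0 AffineMap.hasDerivAt_lineMap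
  have := hline.le_slope_of_hasDerivAt (mem_univ 0) (mem_univ 1) one_pos hderiv
  simp only [slope_def_field, Function.comp_apply, AffineMap.lineMap_apply_one,
    AffineMap.lineMap_apply_zero, sub_zero, div_one] at this
  linarith

theorem StrongConvexOn.sq_norm_sub_le {φ : E → ℝ} {μ : ℝ} {g v : E}
    (hφ : StrongConvexOn univ μ φ) (hg : HasGradientAt φ g v) (u : E) :
    μ / 2 * ‖u - v‖ ^ 2 ≤ φ u - φ v - ⟪g, u - v⟫ := by
  have hq : HasGradientAt (fun w => -(μ / 2 * ‖w‖ ^ 2)) (-(μ • v)) v := by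
    rw [hasGradientAt_iff_hasFDerivAt]
    refine ((hasStrictFDerivAt_norm_sq v).hasFDerivAt.const_mul (μ / 2)).neg.congr_fderiv ?_
    ext w
    simp only [neg_apply, smul_apply, coe_innerSL_apply, nsmul_eq_mul, Nat.cast_ofNat, smul_eq_mul,
      map_neg, map_smul, toDual_apply_apply, neg_inj]
    ring
  have key := (strongConvexOn_iff_convex.mp hφ).add_inner_gradient_le (hg.add hq) u
  have hinner : ⟪g + -(μ • v), u - v⟫ = ⟪g, u - v⟫ - μ * (⟪u, v⟫ - ‖v‖ ^ 2) := by
    simp only [inner_add_left, inner_neg_left, real_inner_smul_left, inner_sub_right,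
      real_inner_self_eq_norm_sq, real_inner_comm u v]
    ring
  rw [hinner] at key
  rw [norm_sub_sq_real]
  linarith

end ConvexGradient

theorem tendsto_zero_of_succ_add_mul_le {u v : ℕ → ℝ} {c : ℝ} (hc : 0 < c)
    (hv : ∀ k, 0 ≤ v k) (hdesc : ∀ k, u (k + 1) + c * v k ≤ u k) (hbdd : BddBelow (range u)) :
    Tendsto v atTop (𝓝 0) := by
  have hanti : Antitone u :=
    antitone_nat_of_succ_le fun k => by nlinarith [hdesc k, hv k]
  have hconv := tendsto_atTop_ciInf hanti hbdd
  have hgap : Tendsto (fun k => (u k - u (k + 1)) / c) atTop (𝓝 0) := by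
    simpa using (hconv.sub (hconv.comp (tendsto_add_atTop_nat 1))).div_const c
  refine squeeze_zero hv (fun k => ?_) hgap
  rw [le_div_iff₀ hc]
  linarith [hdesc k]

section Bregman

variable {n : ℕ} {φ : Eu n → ℝ} {φ' : Eu n → Eu n}

theorem breg_self (v : Eu n) : Breg φ φ' v v = 0 := by
  simp [Breg]

theorem breg_nonneg (hφ : ConvexOn ℝ univ φ) {v : Eu n} (hg : HasGradientAt φ (φ' v) v)
    (u : Eu n) : 0 ≤ Breg φ φ' u v := by
  have := hφ.add_inner_gradient_le hg u
  rw [Breg]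
  linarith

theorem convexOn_breg (hφ : ConvexOn ℝ univ φ) (v : Eu n) :
    ConvexOn ℝ univ (fun u => Breg φ φ' u v) := by
  have hlin := ((innerₛₗ ℝ (-φ' v)).convexOn convex_univ).add_const (⟪φ' v, v⟫ - φ v)
  refine (hφ.add hlin).congr fun u _ => ?_
  simp only [Pi.add_apply, coe_innerₛₗ_apply, inner_neg_left, Breg, inner_sub_right]
  ring

theorem hasGradientAt_breg {ξ : Eu n} (hg : HasGradientAt φ (φ' ξ) ξ) (v : Eu n) :
    HasGradientAt (fun u => Breg φ φ' u v) (φ' ξ - φ' v) ξ := by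
  rw [hasGradientAt_iff_hasFDerivAt, map_sub]
  refine ((hg.hasFDerivAt.sub_const (φ v)).sub
    (((innerSL ℝ (φ' v)).hasFDerivAt.comp ξ ((hasFDerivAt_id ξ).sub_const v)))).congr_fderiv ?_
  ext w
  simp [toDual_apply_apply]

end Bregman

namespace BADMM

open ContinuousLinearMap

variable {n₁ n₂ n₃ m : ℕ} (P : BADMM n₁ n₂ n₃ m)

def resid (k : ℕ) : Eu m := P.A (P.x k) + P.B (P.y k) + P.C (P.z k)

def zObjective (k : ℕ) (ζ : Eu n₃) : ℝ :=
  P.L (P.x (k + 1)) (P.y (k + 1)) ζ (P.p k) + Breg P.φ₃ P.φ₃' ζ (P.z k)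

def lyapunov (k : ℕ) : ℝ :=
  P.Lhat (P.x (k + 1)) (P.y (k + 1)) (P.z (k + 1)) (P.p (k + 1)) (P.z k)

theorem zObjective_eq (k : ℕ) : P.zObjective k = fun ζ =>
    (P.f (P.x (k + 1)) + P.g (P.y (k + 1))) +
      (P.h ζ + (⟪P.p k, (P.A (P.x (k + 1)) + P.B (P.y (k + 1))) + P.C ζ⟫ +
        P.α / 2 * ‖(P.A (P.x (k + 1)) + P.B (P.y (k + 1))) + P.C ζ‖ ^ 2) +
        Breg P.φ₃ P.φ₃' ζ (P.z k)) := by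
  funext ζ
  simp only [zObjective, L, Lag]
  ring

theorem hasGradientAt_zObjective (k : ℕ) (ξ : Eu n₃) :
    HasGradientAt (P.zObjective k)
      (P.h' ξ + adjoint P.C (P.p k + P.α • (P.A (P.x (k + 1)) + P.B (P.y (k + 1)) + P.C ξ)) +
        (P.φ₃' ξ - P.φ₃' (P.z k))) ξ := by
  rw [zObjective_eq]
  exact (((P.hgrad_h ξ).add (hasGradientAt_inner_add_sq_norm_comp _ _ _ _ _)).add
    (hasGradientAt_breg (P.hgrad_φ₃ ξ) _)).const_add _

theorem gradient_zObjective_eq_zero (k : ℕ) :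
    P.h' (P.z (k + 1)) + adjoint P.C (P.p k + P.α • (P.A (P.x (k + 1)) + P.B (P.y (k + 1)) +
      P.C (P.z (k + 1)))) + (P.φ₃' (P.z (k + 1)) - P.φ₃' (P.z k)) = 0 := by
  have hmin : IsLocalMin (P.zObjective k) (P.z (k + 1)) := Eventually.of_forall (P.hz_min k)
  have hzero := hmin.hasFDerivAt_eq_zero (P.hasGradientAt_zObjective k (P.z (k + 1))).hasFDerivAt
  rwa [LinearIsometryEquiv.map_eq_zero_iff] at hzero

theorem adjoint_C_p_succ (k : ℕ) :
    adjoint P.C (P.p (k + 1)) = P.φ₃' (P.z k) - P.h' (P.z (k + 1)) - P.φ₃' (P.z (k + 1)) := by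
  have hzero := P.gradient_zObjective_eq_zero k
  rw [← P.hp_upd k] at hzero
  linear_combination (norm := module) hzero

theorem L_p_succ (k : ℕ) :
    P.L (P.x (k + 1)) (P.y (k + 1)) (P.z (k + 1)) (P.p (k + 1)) =
      P.L (P.x (k + 1)) (P.y (k + 1)) (P.z (k + 1)) (P.p k) + P.α * ‖P.resid (k + 1)‖ ^ 2 := by
  have hinner : ⟪P.p k + P.α • P.resid (k + 1), P.resid (k + 1)⟫ =
      ⟪P.p k, P.resid (k + 1)⟫ + P.α * ‖P.resid (k + 1)‖ ^ 2 := by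
    rw [inner_add_left, real_inner_smul_left, real_inner_self_eq_norm_sq]
  simp only [L, Lag, resid, P.hp_upd k] at hinner ⊢
  rw [hinner]
  ring

theorem strongConvexOn_zObjective (hh : StrongConvex P.μ₃ P.h) (k : ℕ) :
    StrongConvexOn univ P.μ₃ (P.zObjective k) := by
  have hquad := convexOn_inner_add_sq_norm_comp (P.p k) (P.A (P.x (k + 1)) + P.B (P.y (k + 1)))
    P.C P.hα_pos.le
  have hsum := ((hh.add (hquad.add (convexOn_breg (φ' := P.φ₃') P.hφ₃_convex (P.z k)))).add_const
    (P.f (P.x (k + 1)) + P.g (P.y (k + 1))))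
  refine strongConvexOn_iff_convex.mpr (hsum.congr fun ζ _ => ?_)
  simp only [zObjective_eq, Pi.add_apply]
  ring

theorem L_z_succ_add_le (k : ℕ) :
    P.L (P.x (k + 1)) (P.y (k + 1)) (P.z (k + 1)) (P.p k) + P.μ₃ / 2 * ‖P.z (k + 1) - P.z k‖ ^ 2
      ≤ P.L (P.x (k + 1)) (P.y (k + 1)) (P.z k) (P.p k) := by
  have hz := P.hz_min k (P.z k)
  rw [breg_self, add_zero] at hz
  change P.zObjective k (P.z (k + 1)) ≤ P.L (P.x (k + 1)) (P.y (k + 1)) (P.z k) (P.p k) at hz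
  rcases P.hsc₃ with hh | hφ₃
  · have hbreg := breg_nonneg P.hφ₃_convex (P.hgrad_φ₃ (P.z k)) (P.z (k + 1))
    have hgrad := P.hasGradientAt_zObjective k (P.z (k + 1))
    rw [gradient_zObjective_eq_zero] at hgrad
    have hgrowth := (P.strongConvexOn_zObjective hh k).sq_norm_sub_le hgrad (P.z k)
    simp only [zObjective, breg_self, inner_zero_left, norm_sub_rev (P.z k)] at hgrowth hz
    linarith
  · have hgrowth :=
      (strongConvexOn_iff_convex.mpr hφ₃).sq_norm_sub_le (P.hgrad_φ₃ (P.z k)) (P.z (k + 1))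
    change _ ≤ Breg P.φ₃ P.φ₃' (P.z (k + 1)) (P.z k) at hgrowth
    simp only [zObjective] at hz
    linarith

theorem L_succ_add_le (k : ℕ) :
    P.L (P.x (k + 1)) (P.y (k + 1)) (P.z (k + 1)) (P.p k) + P.μ₃ / 2 * ‖P.z (k + 1) - P.z k‖ ^ 2
      ≤ P.L (P.x k) (P.y k) (P.z k) (P.p k) := by
  have hx := P.hx_min k (P.x k)
  have hy := P.hy_min k (P.y k)
  rw [breg_self, add_zero] at hx hy
  have hbx := breg_nonneg P.hφ₁_convex (P.hgrad_φ₁ (P.x k)) (P.x (k + 1))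
  have hby := breg_nonneg P.hφ₂_convex (P.hgrad_φ₂ (P.y k)) (P.y (k + 1))
  have hz := P.L_z_succ_add_le k
  simp only [L] at hz ⊢
  linarith

theorem sq_norm_resid_le (k : ℕ) :
    P.σC * (P.α ^ 2 * ‖P.resid (k + 2)‖ ^ 2) ≤
      2 * (P.ℓh + P.ℓ₃) ^ 2 * ‖P.z (k + 2) - P.z (k + 1)‖ ^ 2 +
        2 * P.ℓ₃ ^ 2 * ‖P.z (k + 1) - P.z k‖ ^ 2 := by
  have hdp : P.p (k + 2) - P.p (k + 1) = P.α • P.resid (k + 2) := by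
    rw [P.hp_upd (k + 1)]
    simp [resid]
  have hdual : adjoint P.C (P.α • P.resid (k + 2)) =
      -(P.h' (P.z (k + 2)) - P.h' (P.z (k + 1))) + -(P.φ₃' (P.z (k + 2)) - P.φ₃' (P.z (k + 1))) +
        (P.φ₃' (P.z (k + 1)) - P.φ₃' (P.z k)) := by
    rw [← hdp, map_sub, adjoint_C_p_succ, adjoint_C_p_succ]
    abel
  have hnorm : ‖adjoint P.C (P.α • P.resid (k + 2))‖ ≤
      (P.ℓh + P.ℓ₃) * ‖P.z (k + 2) - P.z (k + 1)‖ + P.ℓ₃ * ‖P.z (k + 1) - P.z k‖ := by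
    rw [hdual]
    refine norm_add₃_le.trans ?_
    rw [norm_neg, norm_neg]
    linarith [P.hlip_h (P.z (k + 2)) (P.z (k + 1)), P.hlip_φ₃ (P.z (k + 2)) (P.z (k + 1)),
      P.hlip_φ₃ (P.z (k + 1)) (P.z k)]
  have hrank := P.hC_rank (P.α • P.resid (k + 2))
  rw [norm_smul, Real.norm_eq_abs, mul_pow, sq_abs] at hrank
  nlinarith [pow_le_pow_left₀ (norm_nonneg _) hnorm 2,
    sq_nonneg ((P.ℓh + P.ℓ₃) * ‖P.z (k + 2) - P.z (k + 1)‖ - P.ℓ₃ * ‖P.z (k + 1) - P.z k‖)]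

theorem σ1_pos : 0 < P.σ1 := by
  have hα := P.hα_large
  rw [div_lt_iff₀ (mul_pos P.hμ₃_pos P.hσC_pos)] at hα
  have hz : 0 < P.μ₃ - 4 * (P.ℓh + P.ℓ₃) ^ 2 / (P.α * P.σC) - 4 * P.ℓ₃ ^ 2 / (P.α * P.σC) := by
    rw [sub_sub, ← add_div, sub_pos, div_lt_iff₀ (mul_pos P.hα_pos P.hσC_pos)]
    linarith
  have := lt_min P.hμ₁_pos (lt_min P.hμ₂_pos hz)
  unfold σ1
  positivity

theorem σ1_le : P.σ1 ≤ P.μ₃ / 2 - 2 * (P.ℓh + P.ℓ₃) ^ 2 / (P.α * P.σC) - P.σ0 := by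
  unfold σ1 σ0
  calc _ ≤ 1 / 2 * (P.μ₃ - 4 * (P.ℓh + P.ℓ₃) ^ 2 / (P.α * P.σC) - 4 * P.ℓ₃ ^ 2 / (P.α * P.σC)) := by
        gcongr
        exact (min_le_right _ _).trans (min_le_right _ _)
    _ = _ := by ring

theorem σ0_nonneg : 0 ≤ P.σ0 := by
  have := mul_pos P.hα_pos P.hσC_pos
  unfold σ0
  positivity

theorem lyapunov_succ_add_le (k : ℕ) :
    P.lyapunov (k + 1) + P.σ1 * ‖P.z (k + 2) - P.z (k + 1)‖ ^ 2 ≤ P.lyapunov k := by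
  have hc := mul_pos P.hα_pos P.hσC_pos
  have hdesc := P.L_succ_add_le (k + 1)
  have hp := P.L_p_succ (k + 1)
  have hresid : P.α * ‖P.resid (k + 2)‖ ^ 2 ≤
      2 * (P.ℓh + P.ℓ₃) ^ 2 / (P.α * P.σC) * ‖P.z (k + 2) - P.z (k + 1)‖ ^ 2 +
        P.σ0 * ‖P.z (k + 1) - P.z k‖ ^ 2 := by
    rw [σ0, div_mul_eq_mul_div, div_mul_eq_mul_div, ← add_div, le_div_iff₀ hc]
    linarith [P.sq_norm_resid_le k]
  have hσ1 := mul_le_mul_of_nonneg_right P.σ1_le (sq_nonneg ‖P.z (k + 2) - P.z (k + 1)‖)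
  simp only [lyapunov, Lhat]
  linarith

theorem antitone_lyapunov : Antitone P.lyapunov :=
  antitone_nat_of_succ_le fun k => by
    nlinarith [P.lyapunov_succ_add_le k, P.σ1_pos, sq_nonneg ‖P.z (k + 2) - P.z (k + 1)‖]

theorem L_le_lyapunov (k : ℕ) :
    P.L (P.x (k + 1)) (P.y (k + 1)) (P.z (k + 1)) (P.p (k + 1)) ≤ P.lyapunov k := by
  have := mul_nonneg P.σ0_nonneg (sq_nonneg ‖P.z (k + 1) - P.z k‖)
  simp only [lyapunov, Lhat]
  linarith

theorem continuous_h : Continuous P.h :=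
  continuous_iff_continuousAt.mpr fun v => (P.hgrad_h v).differentiableAt.continuousAt

theorem continuous_h' : Continuous P.h' :=
  (LipschitzWith.of_dist_le' (K := P.ℓh) fun a b => by
    simpa only [dist_eq_norm] using P.hlip_h a b).continuous

theorem lowerSemicontinuous_L :
    LowerSemicontinuous fun w : Eu n₁ × Eu n₂ × Eu n₃ × Eu m => P.L w.1 w.2.1 w.2.2.1 w.2.2.2 := by
  have := P.continuous_h
  exact ((((P.hf_lsc.comp continuous_fst).add (P.hg_lsc.comp (by fun_prop))).add
    (Continuous.lowerSemicontinuous (by fun_prop))).add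
    (Continuous.lowerSemicontinuous (by fun_prop))).add
    (Continuous.lowerSemicontinuous (by fun_prop))

theorem bddBelow_lyapunov {xs : Eu n₁} {ys : Eu n₂} {zs : Eu n₃} {ps : Eu m} {κ : ℕ → ℕ}
    (hκ : StrictMono κ)
    (hlim : Tendsto (fun j => (P.x (κ j), P.y (κ j), P.z (κ j), P.p (κ j))) atTop
      (𝓝 (xs, ys, zs, ps))) :
    BddBelow (range P.lyapunov) := by
  obtain ⟨J, hJ⟩ := eventually_atTop.mp
    (hlim.eventually (P.lowerSemicontinuous_L _ _ (sub_one_lt (P.L xs ys zs ps))))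
  refine ⟨P.L xs ys zs ps - 1, ?_⟩
  rintro _ ⟨k, rfl⟩
  -- `lyapunov n` dominates `L(w^{n+1})`; take `n + 1 = κ j` with `j ≥ J` and `κ j > k`.
  have hk : k + 1 ≤ κ (max J (k + 1)) := (le_max_right _ _).trans hκ.le_apply
  obtain ⟨n, hn⟩ : ∃ n, κ (max J (k + 1)) = n + 1 := ⟨_, (Nat.sub_add_cancel (by omega)).symm⟩
  have hL := P.L_le_lyapunov n
  rw [← hn] at hL
  exact (hJ _ (le_max_left _ _)).le.trans (hL.trans (P.antitone_lyapunov (by omega)))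

theorem tendsto_norm_sub_z (hb : BddBelow (range P.lyapunov)) :
    Tendsto (fun k => ‖P.z (k + 1) - P.z k‖) atTop (𝓝 0) := by
  have hsq := tendsto_zero_of_succ_add_mul_le P.σ1_pos (fun _ => sq_nonneg _)
    P.lyapunov_succ_add_le hb
  rw [← tendsto_add_atTop_iff_nat 1]
  simpa using hsq.sqrt

theorem tendsto_resid (hb : BddBelow (range P.lyapunov)) :
    Tendsto P.resid atTop (𝓝 0) := by
  have hpos : 0 < P.σC * P.α ^ 2 := by have := P.hα_pos; have := P.hσC_pos; positivity
  have hz := P.tendsto_norm_sub_z hb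
  have hbound : Tendsto (fun k => (2 * (P.ℓh + P.ℓ₃) ^ 2 * ‖P.z (k + 2) - P.z (k + 1)‖ ^ 2 +
      2 * P.ℓ₃ ^ 2 * ‖P.z (k + 1) - P.z k‖ ^ 2) / (P.σC * P.α ^ 2)) atTop (𝓝 0) := by
    simpa using ((((hz.comp (tendsto_add_atTop_nat 1)).pow 2).const_mul (2 * (P.ℓh + P.ℓ₃) ^ 2)).add
      ((hz.pow 2).const_mul (2 * P.ℓ₃ ^ 2))).div_const (P.σC * P.α ^ 2)
  have hsq : Tendsto (fun k => ‖P.resid (k + 2)‖ ^ 2) atTop (𝓝 0) := by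
    refine squeeze_zero (fun _ => sq_nonneg _) (fun k => ?_) hbound
    rw [le_div_iff₀ hpos]
    linarith [P.sq_norm_resid_le k]
  rw [tendsto_zero_iff_norm_tendsto_zero, ← tendsto_add_atTop_iff_nat 2]
  simpa using hsq.sqrt

theorem tendsto_adjoint_C_p_add_h' (hb : BddBelow (range P.lyapunov)) :
    Tendsto (fun k => adjoint P.C (P.p k) + P.h' (P.z k)) atTop (𝓝 0) := by
  rw [← tendsto_add_atTop_iff_nat 1, tendsto_zero_iff_norm_tendsto_zero]
  refine squeeze_zero (fun _ => norm_nonneg _) (fun k => ?_)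
    (by simpa using (P.tendsto_norm_sub_z hb).const_mul P.ℓ₃)
  have hsum : adjoint P.C (P.p (k + 1)) + P.h' (P.z (k + 1)) =
      P.φ₃' (P.z k) - P.φ₃' (P.z (k + 1)) := by
    rw [adjoint_C_p_succ]
    abel
  rw [hsum, norm_sub_rev]
  exact P.hlip_φ₃ _ _

end BADMM

theorem badmm_cluster_point_general {n₁ n₂ n₃ m : ℕ} (P : BADMM n₁ n₂ n₃ m)
    (xs : Eu n₁) (ys : Eu n₂) (zs : Eu n₃) (ps : Eu m)
    (κ : ℕ → ℕ) (hκ : StrictMono κ)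
    (hlim : Tendsto (fun j : ℕ => (P.x (κ j), P.y (κ j), P.z (κ j), P.p (κ j)))
      atTop (nhds (xs, ys, zs, ps))) :
    P.A xs + P.B ys + P.C zs = 0 ∧
      (ContinuousLinearMap.adjoint P.C) ps = -P.h' zs := by
  have hb := P.bddBelow_lyapunov hκ hlim
  have hh' := P.continuous_h'
  constructor
  · have hcont : Continuous fun w : Eu n₁ × Eu n₂ × Eu n₃ × Eu m =>
        P.A w.1 + P.B w.2.1 + P.C w.2.2.1 := by fun_prop
    exact tendsto_nhds_unique ((hcont.tendsto _).comp hlim)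
      ((P.tendsto_resid hb).comp hκ.tendsto_atTop)
  · have hcont : Continuous fun w : Eu n₁ × Eu n₂ × Eu n₃ × Eu m =>
        ContinuousLinearMap.adjoint P.C w.2.2.2 + P.h' w.2.2.1 := by fun_prop
    have hdual := (hcont.tendsto (xs, ys, zs, ps)).comp hlim
    exact eq_neg_of_add_eq_zero_left (tendsto_nhds_unique hdual
      ((P.tendsto_adjoint_C_p_add_h' hb).comp hκ.tendsto_atTop))

/-- any cluster point of the sequence `w^k = (x^k,y^k,z^k,p^k)` satisfies
the feasibility condition and the dual optimality condition in `z`. -/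
theorem badmm_cluster_point {n₁ n₂ n₃ m : ℕ} (P : BADMM n₁ n₂ n₃ m)
    (hbdd : ∃ M : ℝ, ∀ k : ℕ, ‖P.x k‖ ≤ M ∧ ‖P.y k‖ ≤ M ∧ ‖P.z k‖ ≤ M)
    (xs : Eu n₁) (ys : Eu n₂) (zs : Eu n₃) (ps : Eu m)
    (κ : ℕ → ℕ) (hκ : StrictMono κ)
    (hlim : Tendsto (fun j : ℕ => (P.x (κ j), P.y (κ j), P.z (κ j), P.p (κ j)))
      atTop (nhds (xs, ys, zs, ps))) :
    P.A xs + P.B ys + P.C zs = 0 ∧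
      (ContinuousLinearMap.adjoint P.C) ps = -P.h' zs :=
  badmm_cluster_point_general P xs ys zs ps κ hκ hlim
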